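/- arXiv:1801.02043 — 5 statements merged into one kernel-verified Lean document; each statement's English description precedes it below -/
import Mathlib

section
/- If f : Mat_{n,n}(K)^m → K is invariant under the simultaneous conjugation action of GL_n(K), then the function f̃ : Mat_{n,n}(K)^{m+1} → K defined by f̃(X₁,…,X_{m+1}) = f(adj(X₁)X₂, adj(X₁)X₃, …, adj(X₁)X_{m+1}) is invariant under the left-right action of SL_n(K) × SL_n(K). -/
theorem tilde_invariant_left_right {K : Type*} [Field K] {n m : ℕ}
    (f : (Fin m → Matrix (Fin n) (Fin n) K) → K)
    (hf : ∀ (g : GL (Fin n) K) (Y : Fin m → Matrix (Fin n) (Fin n) K),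
      f (fun i => (g : Matrix (Fin n) (Fin n) K) * Y i * ((g⁻¹ : GL (Fin n) K) : Matrix (Fin n) (Fin n) K)) = f Y)
    (P Q : Matrix (Fin n) (Fin n) K) (hP : P.det = 1) (hQ : Q.det = 1)
    (X : Fin (m + 1) → Matrix (Fin n) (Fin n) K) :
    f (fun i => (P * X 0 * Q⁻¹).adjugate * (P * X i.succ * Q⁻¹)) =
      f (fun i => (X 0).adjugate * X i.succ) := by
  have hPu : IsUnit P.det := by simp [hP]
  have hQu : IsUnit Q.det := by simp [hQ]
  have hQiu : IsUnit (Q⁻¹).det := by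
    rw [Matrix.det_nonsing_inv, hQ]; simp
  have hadjP : P.adjugate = P⁻¹ := by
    rw [Matrix.inv_def, hP]; simp
  have h1 : (Q⁻¹).det = 1 := by rw [Matrix.det_nonsing_inv, hQ]; simp
  have h2 : Q⁻¹ * (Q⁻¹).adjugate = 1 := by rw [Matrix.mul_adjugate, h1, one_smul]
  have hadjQi : (Q⁻¹).adjugate = Q := by
    calc (Q⁻¹).adjugate = Q * (Q⁻¹ * (Q⁻¹).adjugate) := by
          rw [← Matrix.mul_assoc, Matrix.mul_nonsing_inv Q hQu, Matrix.one_mul]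
      _ = Q := by rw [h2, Matrix.mul_one]
  haveI : Invertible Q.det := hQu.invertible
  let g : GL (Fin n) K := Matrix.GeneralLinearGroup.mk' Q this
  have hg : (g : Matrix (Fin n) (Fin n) K) = Q := rfl
  have hgi : ((g⁻¹ : GL (Fin n) K) : Matrix (Fin n) (Fin n) K) = Q⁻¹ := by
    rw [Matrix.coe_units_inv, hg]
  have key : (fun i : Fin m => (P * X 0 * Q⁻¹).adjugate * (P * X i.succ * Q⁻¹)) =
      fun i => (g : Matrix (Fin n) (Fin n) K) * ((X 0).adjugate * X i.succ) *
        ((g⁻¹ : GL (Fin n) K) : Matrix (Fin n) (Fin n) K) := by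
    funext i
    rw [hg, hgi, Matrix.adjugate_mul_distrib, Matrix.adjugate_mul_distrib, hadjP, hadjQi]
    have h3 : P⁻¹ * (P * (X i.succ * Q⁻¹)) = X i.succ * Q⁻¹ := by
      rw [← Matrix.mul_assoc, Matrix.nonsing_inv_mul P hPu, Matrix.one_mul]
    simp only [Matrix.mul_assoc]
    rw [h3]
  rw [key, hf g]
end

section
/- If f : Mat_{n,n}(K)^{m+1} → K is invariant under the left-right action of SL_n(K) × SL_n(K), then the function (X₁,…,X_m) ↦ f(Id, X₁,…,X_m) is invariant under the simultaneous conjugation action of GL_n(K) on Mat_{n,n}(K)^m. (Assume K is algebraically closed so every scalar has an n-th root.) -/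
/-!
Conjugation by `g ∈ GL_n(K)` is conjugation by `c • g` for every scalar `c ≠ 0`, and over an
algebraically closed field `c` can be chosen as an `n`-th root of `(det g)⁻¹`, so that `c • g ∈ SL_n(K)`.
Taking `P = Q = c • g` in the left-right action fixes the first entry `1` and conjugates the others.
-/

namespace Matrix

variable {ι K : Type*} [Fintype ι] [DecidableEq ι] [Field K]

theorem exists_det_smul_eq_one [IsAlgClosed K] {A : Matrix ι ι K} (hA : A.det ≠ 0) :
    ∃ c : K, c ≠ 0 ∧ (c • A).det = 1 := by
  rcases (Fintype.card ι).eq_zero_or_pos with hι | hι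
  · exact ⟨1, one_ne_zero, by rw [one_smul, det_eq_one_of_card_eq_zero hι]⟩
  obtain ⟨c, hc⟩ := IsAlgClosed.exists_pow_nat_eq A.det⁻¹ hι
  refine ⟨c, ?_, ?_⟩
  · rintro rfl
    rw [zero_pow hι.ne'] at hc
    exact inv_ne_zero hA hc.symm
  · rw [det_smul, hc, inv_mul_cancel₀ hA]

theorem smul_mul_mul_inv_smul {c : K} (hc : c ≠ 0) {A : Matrix ι ι K} (hA : A.det ≠ 0)
    (Y : Matrix ι ι K) : c • A * Y * (c • A)⁻¹ = A * Y * A⁻¹ := by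
  have : Invertible c := invertibleOfNonzero hc
  rw [Matrix.inv_smul (A := A) c hA.isUnit, invOf_eq_inv, Matrix.smul_mul, Matrix.smul_mul,
    Matrix.mul_smul, smul_smul, mul_inv_cancel₀ hc, one_smul]

end Matrix

theorem conj_invariant_of_leftRight_invariant {ι K : Type*} [Fintype ι] [DecidableEq ι] [Field K]
    [IsAlgClosed K] {α : Type*} (f : (α → Matrix ι ι K) → K)
    (hf : ∀ P Q : Matrix ι ι K, P.det = 1 → Q.det = 1 → ∀ Y, f (fun i => P * Y i * Q⁻¹) = f Y)
    {A : Matrix ι ι K} (hA : A.det ≠ 0) (Y : α → Matrix ι ι K) :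
    f (fun i => A * Y i * A⁻¹) = f Y := by
  obtain ⟨c, hc, hdet⟩ := Matrix.exists_det_smul_eq_one hA
  simpa only [Matrix.smul_mul_mul_inv_smul hc hA] using hf _ _ hdet hdet Y

theorem restrict_invariant_conj {K : Type*} [Field K] [IsAlgClosed K] {n m : ℕ}
    (f : (Fin (m + 1) → Matrix (Fin n) (Fin n) K) → K)
    (hf : ∀ (P Q : Matrix (Fin n) (Fin n) K), P.det = 1 → Q.det = 1 →
      ∀ Y : Fin (m + 1) → Matrix (Fin n) (Fin n) K,
        f (fun i => P * Y i * Q⁻¹) = f Y)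
    (g : GL (Fin n) K) (X : Fin m → Matrix (Fin n) (Fin n) K) :
    f (Fin.cons 1 (fun i => (g : Matrix (Fin n) (Fin n) K) * X i * ((g⁻¹ : GL (Fin n) K) : Matrix (Fin n) (Fin n) K))) =
      f (Fin.cons 1 X) := by
  set A : Matrix (Fin n) (Fin n) K := (g : Matrix (Fin n) (Fin n) K)
  have hA : A.det ≠ 0 := ((Matrix.isUnit_iff_isUnit_det A).mp g.isUnit).ne_zero
  have hconj : (fun i => A * (Fin.cons 1 X : Fin (m + 1) → Matrix (Fin n) (Fin n) K) i * A⁻¹) =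
      Fin.cons (1 : Matrix (Fin n) (Fin n) K) (fun i => A * X i * A⁻¹) := by
    funext i
    refine Fin.cases ?_ (fun j => rfl) i
    simp only [Fin.cons_zero, mul_one, Matrix.mul_nonsing_inv A hA.isUnit]
  rw [Matrix.coe_units_inv, ← hconj]
  exact conj_invariant_of_leftRight_invariant f hf hA _
end

section
/- Let C₁,…,C_m ∈ Mat_{n,n}(K). Order words in the alphabet [m] by length-then-lexicographic order ≺. Call a word w a non-pivot if C_w lies in the span of {C_u : u ≺ w} (with C_ε = Id). If w is a non-pivot, then for all words x, y, the concatenation xwy is also a non-pivot. -/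
/-- Length-then-lexicographic order on words over `Fin m`. -/
def WordLT {m : ℕ} (w₁ w₂ : List (Fin m)) : Prop :=
  w₁.length < w₂.length ∨ (w₁.length = w₂.length ∧ List.Lex (· < ·) w₁ w₂)

/-- `w` is a non-pivot if `C_w` lies in the span of the `C_u` for `u ≺ w`. -/
def NonPivot {K : Type*} [Field K] {n m : ℕ} (C : Fin m → Matrix (Fin n) (Fin n) K)
    (w : List (Fin m)) : Prop :=
  ((w.map C).prod) ∈ Submodule.span K
    {M : Matrix (Fin n) (Fin n) K | ∃ u : List (Fin m), WordLT u w ∧ M = (u.map C).prod}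

/-! Multiplying `C_w` by `C_x` on the left and `C_y` on the right is a linear map, so it carries a
linear relation of `C_w` with the `C_u`, `u ≺ w`, to one of `C_{xwy}` with the `C_{xuy}`; and
`u ↦ xuy` preserves the length-lexicographic order. -/

theorem List.Lex.append_of_length_eq {α : Type*} {r : α → α → Prop} {u w : List α}
    (h : List.Lex r u w) (hl : u.length = w.length) (y : List α) :
    List.Lex r (u ++ y) (w ++ y) := by
  induction h with
  | nil => simp at hl
  | cons _ ih => exact List.Lex.cons (ih (by simpa using hl))
  | rel h => exact List.Lex.rel h

theorem WordLT.append_append {m : ℕ} {u w : List (Fin m)} (h : WordLT u w) (x y : List (Fin m)) :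
    WordLT (x ++ u ++ y) (x ++ w ++ y) := by
  rcases h with hlt | ⟨hl, hlex⟩
  · left
    simp only [List.length_append]
    omega
  · refine Or.inr ⟨by simp [hl], ?_⟩
    rw [List.append_assoc, List.append_assoc]
    exact (hlex.append_of_length_eq hl y).append_left _ x

theorem Submodule.mul_mul_mem_span_image {R A : Type*} [CommSemiring R] [Semiring A] [Algebra R A]
    {s : Set A} {a : A} (ha : a ∈ Submodule.span R s) (x y : A) :
    x * a * y ∈ Submodule.span R ((fun b => x * b * y) '' s) := by
  let f : A →ₗ[R] A := LinearMap.mulLeft R x ∘ₗ LinearMap.mulRight R y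
  have hf : ⇑f = fun b => x * b * y := funext fun b => (mul_assoc x b y).symm
  have hmap := Submodule.mem_map_of_mem (f := f) ha
  rwa [← Submodule.span_image, hf] at hmap

theorem nonPivot_concat {K : Type*} [Field K] {n m : ℕ}
    (C : Fin m → Matrix (Fin n) (Fin n) K) (w : List (Fin m))
    (hw : NonPivot C w) (x y : List (Fin m)) :
    NonPivot C (x ++ w ++ y) := by
  have hprod : ∀ u,
      ((x ++ u ++ y).map C).prod = (x.map C).prod * (u.map C).prod * (y.map C).prod := fun u => by simp only [List.map_append, List.prod_append]
  unfold NonPivot at hw ⊢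
  rw [hprod]
  refine Submodule.span_mono ?_ (Submodule.mul_mul_mem_span_image hw _ _)
  rintro _ ⟨_, ⟨u, hu, rfl⟩, rfl⟩
  exact ⟨x ++ u ++ y, hu.append_append x y, (hprod u).symm⟩
end

section
/- Every contiguous subword of a pivot word is itself a pivot. -/
/-- `w` is a pivot if `C_w` does not lie in the span of the `C_u` for `u ≺ w`. -/
def Pivot {K : Type*} [Field K] {n m : ℕ} (C : Fin m → Matrix (Fin n) (Fin n) K)
    (w : List (Fin m)) : Prop :=
  ((w.map C).prod) ∉ Submodule.span K
    {M : Matrix (Fin n) (Fin n) K | ∃ u : List (Fin m), WordLT u w ∧ M = (u.map C).prod}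

lemma lex_append_left {α : Type*} (r : α → α → Prop) (p : List α) {a b : List α}
    (h : List.Lex r a b) : List.Lex r (p ++ a) (p ++ b) := by
  induction p with
  | nil => exact h
  | cons c p ih => exact List.Lex.cons ih

lemma lex_append_right {α : Type*} {r : α → α → Prop} {a b : List α} (s : List α)
    (hlen : a.length = b.length) (h : List.Lex r a b) :
    List.Lex r (a ++ s) (b ++ s) := by
  induction h with
  | nil => simp at hlen
  | rel hr => exact List.Lex.rel hr
  | cons h ih => exact List.Lex.cons (ih (by simpa using hlen))

lemma wordLT_sandwich {m : ℕ} (x y : List (Fin m)) {v u : List (Fin m)}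
    (h : WordLT v u) : WordLT (x ++ v ++ y) (x ++ u ++ y) := by
  rcases h with h | ⟨hlen, hlex⟩
  · left; simp only [List.length_append]; omega
  · right
    refine ⟨by simp [hlen], ?_⟩
    rw [List.append_assoc, List.append_assoc]
    exact lex_append_left _ x (lex_append_right y (by simp [hlen]) hlex)

theorem subword_of_pivot_is_pivot {K : Type*} [Field K] {n m : ℕ}
    (C : Fin m → Matrix (Fin n) (Fin n) K) (w x u y : List (Fin m))
    (hw : w = x ++ u ++ y) (hpivot : Pivot C w) :
    Pivot C u := by
  intro hu
  apply hpivot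
  set f : Matrix (Fin n) (Fin n) K →ₗ[K] Matrix (Fin n) (Fin n) K :=
    (LinearMap.mulRight K ((y.map C).prod)).comp
      (LinearMap.mulLeft K ((x.map C).prod)) with hf
  have hfmem := Submodule.mem_map_of_mem (f := f) hu
  rw [Submodule.map_span] at hfmem
  have hfw : f ((u.map C).prod) = (w.map C).prod := by
    simp [hf, hw, LinearMap.mulRight_apply, LinearMap.mulLeft_apply, Matrix.mul_assoc]
  rw [hfw] at hfmem
  refine Submodule.span_mono ?_ hfmem
  rintro M ⟨N, ⟨v, hv, rfl⟩, rfl⟩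
  refine ⟨x ++ v ++ y, ?_, ?_⟩
  · rw [hw]; exact wordLT_sandwich x y hv
  · simp [hf, LinearMap.mulRight_apply, LinearMap.mulLeft_apply, Matrix.mul_assoc]
end

section
/- Let P be the set of pivot words for matrices C₁,…,C_m ∈ Mat_{n,n}(K). Then {C_w : w ∈ P} is a basis of the unital subalgebra of Mat_{n,n}(K) generated by C₁,…,C_m. -/
open Submodule Set

section Pivots

variable {ι V : Type*} (K : Type*) [DivisionRing K] [AddCommGroup V] [Module K V]

def pivots (r : ι → ι → Prop) (v : ι → V) : Set ι :=
  {i | v i ∉ span K (v '' {j | r j i})}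

variable {K} (r : ι → ι → Prop) (v : ι → V)

theorem linearIndepOn_pivots [IsStrictTotalOrder ι r] : LinearIndepOn K v (pivots K r v) := by
  classical
  let := linearOrderOfSTO r
  refine linearIndepOn_of_finite _ fun t ht htfin => ?_
  lift t to Finset ι using htfin
  induction t using Finset.induction_on_max with
  | empty => simp
  | insert i t hlt ih =>
    rw [Finset.coe_insert] at ht ⊢
    have hi : i ∉ (t : Set ι) := fun hit => lt_irrefl i (hlt i hit)
    refine (linearIndepOn_insert hi).2 ⟨ih ((subset_insert _ _).trans ht), fun hmem => ?_⟩
    exact ht (mem_insert i _) (span_mono (image_mono hlt) hmem)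

theorem span_image_pivots (hr : WellFounded r) :
    span K (v '' pivots K r v) = span K (range v) := by
  refine le_antisymm (span_mono (image_subset_range v _)) (span_le.2 ?_)
  rintro _ ⟨i, rfl⟩
  induction i using hr.induction with
  | _ i ih =>
    by_cases hi : i ∈ pivots K r v
    · exact subset_span (mem_image_of_mem v hi)
    · refine span_le.2 ?_ (not_not.1 hi)
      rintro _ ⟨j, hj, rfl⟩
      exact ih j hj

end Pivots

-- `Shortlex` is the pullback of the lexicographic order of `ℕ ×ₗ List α` along `l ↦ (|l|, l)`.
theorem List.Shortlex.isStrictTotalOrder {α : Type*} [LinearOrder α] :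
    IsStrictTotalOrder (List α) (List.Shortlex (· < ·)) :=
  { (inferInstance :
      IsStrictOrder _ ((fun l : List α => toLex (l.length, l)) ⁻¹'o (· < ·))) with }

theorem Submonoid.coe_closure_range {M α : Type*} [Monoid M] (f : α → M) :
    (closure (range f) : Set M) = range fun l : List α => (l.map f).prod := by
  rw [← FreeMonoid.mrange_lift, MonoidHom.coe_mrange]
  ext x
  simp only [mem_range, FreeMonoid.lift_apply]
  exact FreeMonoid.toList.symm.surjective.exists (p := fun l : List α => (l.map f).prod = x)

theorem Algebra.toSubmodule_adjoin_range {R A α : Type*} [CommSemiring R] [Semiring A]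
    [Algebra R A] (f : α → A) :
    Subalgebra.toSubmodule (adjoin R (range f)) =
      span R (range fun l : List α => (l.map f).prod) := by
  rw [adjoin_eq_span, Submonoid.coe_closure_range]

theorem wordLT_eq_shortlex {m : ℕ} : @WordLT m = List.Shortlex (· < ·) := by
  funext u w
  exact propext List.shortlex_def.symm

theorem setOf_pivot_eq_pivots {K : Type*} [Field K] {n m : ℕ}
    (C : Fin m → Matrix (Fin n) (Fin n) K) :
    {w | Pivot C w} = pivots K (List.Shortlex (· < ·)) fun w => (w.map C).prod := by
  ext w
  simp only [Pivot, pivots, wordLT_eq_shortlex, Set.image, mem_ofPred_eq, eq_comm]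

theorem pivot_basis {K : Type*} [Field K] {n m : ℕ}
    (C : Fin m → Matrix (Fin n) (Fin n) K) :
    LinearIndependent K
      (fun w : {w : List (Fin m) // Pivot C w} => ((w : List (Fin m)).map C).prod) ∧
    Submodule.span K
        (Set.range fun w : {w : List (Fin m) // Pivot C w} => ((w : List (Fin m)).map C).prod) =
      Subalgebra.toSubmodule (Algebra.adjoin K (Set.range C)) := by
  have : IsStrictTotalOrder (List (Fin m)) (List.Shortlex (· < ·)) :=
    List.Shortlex.isStrictTotalOrder
  have hindep := linearIndepOn_pivots (K := K) (List.Shortlex (· < ·)) fun w => (w.map C).prod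
  have hspan := span_image_pivots (K := K) (List.Shortlex (· < ·)) (fun w => (w.map C).prod)
    (List.Shortlex.wf wellFounded_lt)
  rw [← setOf_pivot_eq_pivots, image_eq_range] at hspan
  rw [← setOf_pivot_eq_pivots] at hindep
  exact ⟨hindep, hspan.trans (Algebra.toSubmodule_adjoin_range C).symm⟩
end
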